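/- For every integer n ≥ 2, with a_n = ⌊log n / log 2⌋, b_n = ⌊log n / log 2⌋ + 2{n/2}, and c_n = d_n = ⌊n/2⌋ − ⌊log n / log 2⌋, one has the bound |log((1 − 2^{−a_n})^{d_n} (1 − 2^{−b_n})^{c_n})| < 2. -/

import Mathlib

/-- `a_n = ⌊log n / log 2⌋` (integer part; `log` is the natural logarithm). -/
noncomputable def aSeq (n : ℕ) : ℕ := ⌊Real.log n / Real.log 2⌋₊

/-- `b_n = ⌊log n / log 2⌋ + 2{n/2}`, where `2{n/2}` is `0` if `n` is even and `1` if odd. -/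
noncomputable def bSeq (n : ℕ) : ℕ := aSeq n + n % 2

/-- `c_n = d_n = ⌊n/2⌋ − ⌊log n / log 2⌋`. -/
noncomputable def cSeq (n : ℕ) : ℕ := n / 2 - aSeq n

/-- The multinomial coefficient `C(n; a_n, b_n, c_n, d_n) = n!/(a_n! b_n! c_n! d_n!)`
(the subtraction `c_n = ⌊n/2⌋ − a_n` is exact and `a_n + b_n + c_n + d_n = n`). -/
noncomputable def multinomialSeq (n : ℕ) : ℝ :=
  (n.factorial : ℝ) /
    ((aSeq n).factorial * (bSeq n).factorial * (cSeq n).factorial * (cSeq n).factorial)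

/-- The singled-out term
`t_n = C(n; a_n,b_n,c_n,d_n) (1/2)^{a_n+c_n} (1/2)^{b_n+d_n} (1/2)^{a_n b_n}
       (1 − 2^{−a_n})^{d_n} (1 − 2^{−b_n})^{c_n}` with `d_n = c_n`. -/
noncomputable def tSeq (n : ℕ) : ℝ :=
  multinomialSeq n *
    ((1 / 2 : ℝ) ^ (aSeq n + cSeq n) * (1 / 2 : ℝ) ^ (bSeq n + cSeq n) *
      (1 / 2 : ℝ) ^ (aSeq n * bSeq n) *
      (1 - (2 : ℝ) ^ (-(aSeq n : ℤ))) ^ cSeq n *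
      (1 - (2 : ℝ) ^ (-(bSeq n : ℤ))) ^ cSeq n)

/-!
Since `2 ^ a_n ≤ n < 2 ^ (a_n + 1)` and `a_n ≥ 1`, we get `c_n + 1 < 2 ^ a_n ≤ 2 ^ b_n`.
By `-log (1 - x) ≤ x / (1 - x)`, the factor `(1 - 2^{-k})^{c_n}` with `k ∈ {a_n, b_n}` has
`|log| ≤ c_n / (2^k - 1) < 1`, and the two factors together stay below `2`.
-/

open Real

theorem aSeq_eq_log (n : ℕ) : aSeq n = Nat.log 2 n := by
  simpa [aSeq, logb] using natFloor_logb_natCast 2 n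

theorem aSeq_pos {n : ℕ} (hn : 2 ≤ n) : 0 < aSeq n := by
  rw [aSeq_eq_log]
  exact Nat.log_pos one_lt_two hn

theorem cSeq_add_one_lt_two_pow {n : ℕ} (hn : 2 ≤ n) : cSeq n + 1 < 2 ^ aSeq n := by
  have h_pos := aSeq_pos hn
  have h_lt : n < 2 ^ (aSeq n + 1) := aSeq_eq_log n ▸ Nat.lt_pow_succ_log_self one_lt_two n
  rw [pow_succ] at h_lt
  unfold cSeq
  omega

theorem neg_log_one_sub_le {x : ℝ} (hx : x < 1) : -log (1 - x) ≤ x / (1 - x) := by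
  have h := one_sub_inv_le_log_of_pos (sub_pos.2 hx)
  have h_eq : x / (1 - x) = (1 - x)⁻¹ - 1 := by
    field_simp [(sub_pos.2 hx).ne']
    ring
  linarith

theorem abs_log_one_sub_pow_lt_one {x : ℝ} {c : ℕ} (hx : 0 ≤ x) (h : (c + 1) * x < 1) :
    |log ((1 - x) ^ c)| < 1 := by
  have hx1 : x < 1 := by nlinarith [c.cast_nonneg (α := ℝ)]
  have h_one_sub : 0 < 1 - x := sub_pos.2 hx1
  have h_log_nonpos : log (1 - x) ≤ 0 := log_nonpos h_one_sub.le (by linarith)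
  rw [log_pow, abs_of_nonpos (mul_nonpos_of_nonneg_of_nonpos c.cast_nonneg h_log_nonpos)]
  calc -(c * log (1 - x)) = c * -log (1 - x) := by ring
    _ ≤ c * (x / (1 - x)) := mul_le_mul_of_nonneg_left (neg_log_one_sub_le hx1) c.cast_nonneg
    _ < 1 := by
      rw [mul_div_assoc', div_lt_one h_one_sub]
      linarith

theorem abs_log_one_sub_two_zpow_pow_lt_one {k c : ℕ} (h : c + 1 < 2 ^ k) :
    |log ((1 - (2 : ℝ) ^ (-(k : ℤ))) ^ c)| < 1 := by
  refine abs_log_one_sub_pow_lt_one (zpow_nonneg zero_le_two _) ?_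
  rw [zpow_neg, zpow_natCast, ← div_eq_mul_inv, div_lt_one (by positivity)]
  exact_mod_cast h

theorem one_sub_two_zpow_neg_pos {k : ℕ} (hk : 0 < k) : 0 < 1 - (2 : ℝ) ^ (-(k : ℤ)) :=
  sub_pos.2 (zpow_lt_one_of_neg₀ one_lt_two (by omega))

/-- For every `n ≥ 2`,
`|log((1 − 2^{−a_n})^{d_n} (1 − 2^{−b_n})^{c_n})| < 2` (with `d_n = c_n`). -/
theorem abs_log_correction_lt_two (n : ℕ) (hn : 2 ≤ n) :
    |Real.log ((1 - (2 : ℝ) ^ (-(aSeq n : ℤ))) ^ cSeq n *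
        (1 - (2 : ℝ) ^ (-(bSeq n : ℤ))) ^ cSeq n)| < 2 := by
  have h_ab : aSeq n ≤ bSeq n := Nat.le_add_right _ _
  have hc_a : cSeq n + 1 < 2 ^ aSeq n := cSeq_add_one_lt_two_pow hn
  have hc_b : cSeq n + 1 < 2 ^ bSeq n := hc_a.trans_le (Nat.pow_le_pow_right two_pos h_ab)
  have ha_pos := aSeq_pos hn
  rw [log_mul (pow_pos (one_sub_two_zpow_neg_pos ha_pos) _).ne'
    (pow_pos (one_sub_two_zpow_neg_pos (ha_pos.trans_le h_ab)) _).ne']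
  calc _ ≤ _ := abs_add_le _ _
    _ < 1 + 1 := add_lt_add (abs_log_one_sub_two_zpow_pow_lt_one hc_a)
        (abs_log_one_sub_two_zpow_pow_lt_one hc_b)
    _ = 2 := one_add_one_eq_two
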